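/- arXiv:0910.4886 — 2 statements merged into one kernel-verified Lean document; each statement's English description precedes it below -/
import Mathlib

section
/- Let Γ be a finite connected simplicial graph with no SIL whose vertices are labeled by nontrivial cyclic groups, let G_Γ be the associated graph product, and let v, w be distinct non-adjacent vertices. Let C₀ be the connected component of Γ∖st(v) containing w and D₀ the connected component of Γ∖st(w) containing v. Then for any connected component C of Γ∖st(v) and any connected component D of Γ∖st(w), the partial conjugations π_{v,C} and π_{w,D} commute in Aut(G_Γ) unless C = C₀ and D = D₀. -/
/-!
Suppose `w ∉ C`. Then `C` avoids `st w`, and by the absence of a SIL the component of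
`Γ ∖ (lk v ∩ lk w)` containing `C` also contains `v` or `w`. A path from `C` to that vertex
leaves `C` through an edge ending in `lk v ∖ st w`, so `C` lies in the component `D₀` of
`Γ ∖ st w` containing `v`. Hence either `D = D₀`, and the two partial conjugations nest
(`C ⊆ D`, `v ∈ D`), or `D` is disjoint from `C` and misses `v`; in both cases they commute on
every vertex group. If instead `w ∈ C`, then `C = C₀`, so `D ≠ D₀` and `v ∉ D`, and the same
argument applies with `v` and `w` exchanged.
-/

open Monoid

namespace ArXiv

universe u uG

variable {V : Type u}

/-- The star of a vertex: the vertex together with its neighbors. -/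
def star (Γ : SimpleGraph V) (v : V) : Set V := insert v (Γ.neighborSet v)

/-- `C ⊆ V` is the vertex set of a connected component of the full subgraph of `Γ`
induced on `S`. -/
def IsCompOf (Γ : SimpleGraph V) (S : Set V) (C : Set V) : Prop :=
  ∃ c : (Γ.induce S).ConnectedComponent, C = Subtype.val '' c.supp

/-- `Γ` has a separating intersection of links: there are distinct non-adjacent vertices
`v, w` such that some connected component of `Γ ∖ (lk(v) ∩ lk(w))` contains neither `v`
nor `w`. -/
def HasSIL (Γ : SimpleGraph V) : Prop :=
  ∃ v w : V, v ≠ w ∧ ¬ Γ.Adj v w ∧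
    ∃ C : Set V, IsCompOf Γ ((Γ.neighborSet v ∩ Γ.neighborSet w)ᶜ) C ∧ v ∉ C ∧ w ∉ C

variable (Γ : SimpleGraph V) (G : V → Type uG) [∀ v, Group (G v)]

/-- The commutator relators defining the graph product. -/
def rels : Set (Monoid.CoprodI G) :=
  {x | ∃ (v w : V) (_ : Γ.Adj v w) (g : G v) (h : G w),
    x = CoprodI.of g * CoprodI.of h * (CoprodI.of g)⁻¹ * (CoprodI.of h)⁻¹}

/-- The graph product of the vertex groups `G v` over the graph `Γ`: the quotient of the
free product by the normal closure of the commutators of adjacent vertex groups. -/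
def GraphProduct : Type (max u uG) :=
  Monoid.CoprodI G ⧸ Subgroup.normalClosure (rels Γ G)

instance : Group (GraphProduct Γ G) :=
  inferInstanceAs (Group (Monoid.CoprodI G ⧸ Subgroup.normalClosure (rels Γ G)))

/-- The canonical map from a vertex group into the graph product. -/
def of {v : V} : G v →* GraphProduct Γ G :=
  (QuotientGroup.mk' (Subgroup.normalClosure (rels Γ G))).comp CoprodI.of

theorem of_commute {v w : V} (h : Γ.Adj v w) (g : G v) (k : G w) :
    Commute (of Γ G g) (of Γ G k) := by
  rw [← commutatorElement_eq_one_iff_commute]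
  have hmem : (CoprodI.of g * CoprodI.of k * (CoprodI.of g)⁻¹ * (CoprodI.of k)⁻¹ :
      Monoid.CoprodI G) ∈ Subgroup.normalClosure (rels Γ G) :=
    Subgroup.subset_normalClosure ⟨v, w, h, g, k, rfl⟩
  have h1 : (QuotientGroup.mk' (Subgroup.normalClosure (rels Γ G)))
      (CoprodI.of g * CoprodI.of k * (CoprodI.of g)⁻¹ * (CoprodI.of k)⁻¹) = 1 :=
    (QuotientGroup.eq_one_iff _).mpr hmem
  simp only [map_mul, map_inv] at h1
  rw [commutatorElement_def]
  exact h1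

/-- `π` is the partial conjugation `π_{v,C}`, for vertex groups with chosen generators
`gen`: it conjugates the generators in `C` by (the generator of) `v` and fixes all other
generators. -/
def IsPartialConj (gen : ∀ v, G v) (π : MulAut (GraphProduct Γ G)) (v : V) (C : Set V) :
    Prop :=
  (∀ u ∈ C, ∀ g : G u, π (of Γ G g) = of Γ G (gen v) * of Γ G g * (of Γ G (gen v))⁻¹) ∧
  (∀ u ∉ C, ∀ g : G u, π (of Γ G g) = of Γ G g)

/-- `π` is the partial conjugation `π_{a,C}` by the element `a` of the vertex group `G v`:
it conjugates the vertex groups in `C` by `a` and fixes all other vertex groups. -/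
def IsPartialConjBy {v : V} (a : G v) (π : MulAut (GraphProduct Γ G)) (C : Set V) : Prop :=
  (∀ u ∈ C, ∀ g : G u, π (of Γ G g) = of Γ G a * of Γ G g * (of Γ G a)⁻¹) ∧
  (∀ u ∉ C, ∀ g : G u, π (of Γ G g) = of Γ G g)

/-- The vertex set of the graph `Γ̃`: pairs `p_{v,C}` where `C` is a connected component
of `Γ ∖ st(v)`. -/
def TV : Type u := {p : V × Set V // IsCompOf Γ ((star Γ p.1)ᶜ) p.2}

/-- The graph `Γ̃`: vertices `p_{v,C}` and `p_{w,D}` are joined by an edge unless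
`v, w` are distinct non-adjacent vertices with `v ∈ D` and `w ∈ C`. -/
def tilde : SimpleGraph (TV Γ) where
  Adj p q := p ≠ q ∧
    ¬(p.1.1 ≠ q.1.1 ∧ ¬ Γ.Adj p.1.1 q.1.1 ∧ p.1.1 ∈ q.1.2 ∧ q.1.1 ∈ p.1.2)
  symm := by
    constructor
    rintro p q ⟨h1, h2⟩
    exact ⟨h1.symm, fun ⟨a, b, c, d⟩ => h2 ⟨a.symm, fun e => b e.symm, d, c⟩⟩
  loopless := ⟨fun p h => h.1 rfl⟩

/-- The graph product `G_{Γ̃}`, where the vertex `p_{v,C}` is labeled by (a copy of) the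
group `G v`. -/
abbrev TildeProduct : Type (max u uG) :=
  GraphProduct (tilde Γ) (fun p : TV Γ => G p.1.1)

/-- The element `p_v = ∏_C p_{v,C} ∈ G_{Γ̃}`, the product over all connected components
`C` of `Γ ∖ st(v)` (the factors pairwise commute). -/
noncomputable def pvert [Finite V] (gen : ∀ v, G v) (v : V) : TildeProduct Γ G :=
  haveI : Fintype {C : Set V // IsCompOf Γ ((star Γ v)ᶜ) C} := Fintype.ofFinite _
  Finset.noncommProd (Finset.univ : Finset {C : Set V // IsCompOf Γ ((star Γ v)ᶜ) C})
    (fun c => of (tilde Γ) (fun p : TV Γ => G p.1.1) (v := ⟨(v, c.1), c.2⟩) (gen v))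
    (by
      intro a _ b _ hab
      have hadj : (tilde Γ).Adj ⟨(v, a.1), a.2⟩ ⟨(v, b.1), b.2⟩ := by
        refine ⟨fun h => hab (Subtype.ext (congrArg (fun x : TV Γ => x.1.2) h)), ?_⟩
        rintro ⟨hne, -⟩
        exact hne rfl
      exact of_commute (tilde Γ) (fun p : TV Γ => G p.1.1) hadj (gen v) (gen v))

/-- The set `Δ` of vertices adjacent to every other vertex of `Γ`. -/
def Delta (Γ : SimpleGraph V) : Set V := {v | ∀ u, u ≠ v → Γ.Adj v u}

/-- The subgroup of the graph product generated by the vertex groups `G v`, `v ∈ T`. -/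
def vertexSubgroup (T : Set V) : Subgroup (GraphProduct Γ G) :=
  Subgroup.closure {x | ∃ v ∈ T, ∃ g : G v, x = of Γ G g}

/-- `w` is a reduced word for the element `g` of the graph product: a minimal length
expression of `g` as a product of nontrivial elements of vertex groups. -/
def IsReducedWord (g : GraphProduct Γ G) (w : List (Σ v : V, G v)) : Prop :=
  (w.map fun l => of Γ G l.2).prod = g ∧ (∀ l ∈ w, l.2 ≠ 1) ∧
    ∀ w' : List (Σ v : V, G v), (w'.map fun l => of Γ G l.2).prod = g →
      w.length ≤ w'.length

open SimpleGraph

section Components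

variable {Γ} {S T C D : Set V}

lemma IsCompOf.subset (hC : IsCompOf Γ S C) : C ⊆ S := by
  obtain ⟨c, rfl⟩ := hC
  rintro _ ⟨x, -, rfl⟩
  exact x.2

lemma IsCompOf.nonempty (hC : IsCompOf Γ S C) : C.Nonempty := by
  obtain ⟨c, rfl⟩ := hC
  exact ⟨c.out.1, c.out, c.out_eq, rfl⟩

lemma IsCompOf.mem_of_adj (hC : IsCompOf Γ S C) {x y : V} (hx : x ∈ C) (hy : y ∈ S)
    (hxy : Γ.Adj x y) : y ∈ C := by
  obtain ⟨c, rfl⟩ := hC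
  obtain ⟨x, hx, rfl⟩ := hx
  exact ⟨⟨y, hy⟩, c.mem_supp_of_adj_mem_supp hx hxy, rfl⟩

lemma IsCompOf.subset_of_mem (hC : IsCompOf Γ S C) (hD : IsCompOf Γ T D) (hCT : C ⊆ T)
    {x : V} (hxC : x ∈ C) (hxD : x ∈ D) : C ⊆ D := by
  obtain ⟨c, rfl⟩ := hC
  obtain ⟨d, rfl⟩ := hD
  obtain ⟨x, hx, rfl⟩ := hxC
  obtain ⟨x', hx', hxx'⟩ := hxD
  let φ : c.toSimpleGraph →g Γ.induce T :=
    { toFun := fun u => ⟨u.1.1, hCT ⟨u.1, u.2, rfl⟩⟩, map_rel' := id }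
  rintro _ ⟨y, hy, rfl⟩
  refine ⟨φ ⟨y, hy⟩, ?_, rfl⟩
  rw [ConnectedComponent.mem_supp_iff] at hx' ⊢
  rw [← hx', show x' = φ ⟨x, hx⟩ from Subtype.ext hxx']
  exact ConnectedComponent.sound ((c.reachable_toSimpleGraph hy hx).map φ)

lemma IsCompOf.eq_of_mem (hC : IsCompOf Γ S C) (hD : IsCompOf Γ S D) {x : V} (hxC : x ∈ C)
    (hxD : x ∈ D) : C = D :=
  (hC.subset_of_mem hD hC.subset hxC hxD).antisymm (hD.subset_of_mem hC hD.subset hxD hxC)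

lemma IsCompOf.exists_adj_of_walk (hC : IsCompOf Γ S C) {a b : T} (p : (Γ.induce T).Walk a b)
    (ha : a.1 ∈ C) (hb : b.1 ∉ C) : ∃ x ∈ C, ∃ y ∈ T, y ∉ S ∧ Γ.Adj x y := by
  obtain ⟨d, -, hd₁, hd₂⟩ := p.exists_boundary_dart {u | u.1 ∈ C} ha hb
  exact ⟨_, hd₁, _, d.snd.2, fun hS => hd₂ (hC.mem_of_adj hd₁ hS d.adj), d.adj⟩

lemma notMem_star_iff {v w : V} : w ∉ star Γ v ↔ w ≠ v ∧ ¬ Γ.Adj v w := by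
  simp [star]

lemma IsCompOf.subset_compl_star {v w : V} (hC : IsCompOf Γ (star Γ v)ᶜ C) (hwv : w ∉ star Γ v)
    (hwC : w ∉ C) : C ⊆ (star Γ w)ᶜ := by
  intro x hx hxw
  rcases hxw with rfl | hwx
  · exact hwC hx
  · exact hwC (hC.mem_of_adj hx hwv hwx.symm)

end Components

section NoSIL

variable {Γ} {v w : V} {C D : Set V}

lemma IsCompOf.subset_of_not_hasSIL (hsil : ¬ HasSIL Γ) (hvw : v ≠ w) (hadj : ¬ Γ.Adj v w)
    (hC : IsCompOf Γ (star Γ v)ᶜ C) (hwC : w ∉ C) (hD : IsCompOf Γ (star Γ w)ᶜ D)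
    (hvD : v ∈ D) : C ⊆ D := by
  have hwv : w ∉ star Γ v := notMem_star_iff.2 ⟨hvw.symm, hadj⟩
  have hCw := hC.subset_compl_star hwv hwC
  set L := (Γ.neighborSet v ∩ Γ.neighborSet w)ᶜ
  obtain ⟨u, hu⟩ := hC.nonempty
  have huL : u ∈ L := fun h => hC.subset hu (Or.inr h.1)
  set E := Subtype.val '' ((Γ.induce L).connectedComponentMk ⟨u, huL⟩).supp
  have hE : IsCompOf Γ L E := ⟨_, rfl⟩
  have hvwE : v ∈ E ∨ w ∈ E := by
    by_contra! h
    exact hsil ⟨v, w, hvw, hadj, E, hE, h.1, h.2⟩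
  obtain ⟨t, ⟨t', ht', rfl⟩, htC⟩ : ∃ t ∈ E, t ∉ C := by
    rcases hvwE with h | h
    exacts [⟨v, h, fun hv => hC.subset hv (Set.mem_insert v _)⟩, ⟨w, h, hwC⟩]
  obtain ⟨p⟩ := ConnectedComponent.exact ht'
  obtain ⟨x, hxC, y, hyL, hyv, hxy⟩ := hC.exists_adj_of_walk p.reverse hu htC
  have hvy : Γ.Adj v y := by
    rcases Set.notMem_compl_iff.1 hyv with rfl | hvy
    · exact absurd (Or.inr hxy.symm) (hC.subset hxC)
    · exact hvy
  have hyw : y ∉ star Γ w := notMem_star_iff.2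
    ⟨by rintro rfl; exact hadj hvy, fun hwy => hyL ⟨hvy, hwy⟩⟩
  have hyD : y ∈ D := hD.mem_of_adj hvD hyw hvy
  exact hC.subset_of_mem hD hCw hxC (hD.mem_of_adj hyD (hCw hxC) hxy.symm)

end NoSIL

section PartialConj

variable {Γ G}

lemma GraphProduct.hom_ext {H : Type*} [Monoid H] {f g : GraphProduct Γ G →* H}
    (h : ∀ v (x : G v), f (of Γ G x) = g (of Γ G x)) : f = g :=
  QuotientGroup.monoidHom_ext _ (CoprodI.ext_hom _ _ fun v => MonoidHom.ext (h v))

lemma GraphProduct.mulAut_ext {φ ψ : MulAut (GraphProduct Γ G)}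
    (h : ∀ v (x : G v), φ (of Γ G x) = ψ (of Γ G x)) : φ = ψ :=
  MulEquiv.toMonoidHom_injective (GraphProduct.hom_ext h)

lemma GraphProduct.mulAut_commute_iff {φ ψ : MulAut (GraphProduct Γ G)} :
    Commute φ ψ ↔ ∀ v (x : G v), φ (ψ (of Γ G x)) = ψ (φ (of Γ G x)) :=
  ⟨fun h _ x => congrArg (· (of Γ G x)) h.eq, GraphProduct.mulAut_ext (φ := φ * ψ) (ψ := ψ * φ)⟩

variable {v w : V} {a : G v} {b : G w} {π₁ π₂ : MulAut (GraphProduct Γ G)} {C D : Set V}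

lemma IsPartialConjBy.commute_of_disjoint (hπ₁ : IsPartialConjBy Γ G a π₁ C)
    (hπ₂ : IsPartialConjBy Γ G b π₂ D) (hwC : w ∉ C) (hvD : v ∉ D) (hCD : Disjoint C D) :
    Commute π₁ π₂ := by
  refine GraphProduct.mulAut_commute_iff.2 fun u x => ?_
  by_cases huC : u ∈ C
  · have huD : u ∉ D := hCD.notMem_of_mem_left huC
    simp only [map_mul, map_inv, hπ₁.1 u huC, hπ₂.2 u huD, hπ₂.2 v hvD]
  · by_cases huD : u ∈ D
    · simp only [map_mul, map_inv, hπ₂.1 u huD, hπ₁.2 u huC, hπ₁.2 w hwC]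
    · simp only [hπ₁.2 u huC, hπ₂.2 u huD]

lemma IsPartialConjBy.commute_of_subset (hπ₁ : IsPartialConjBy Γ G a π₁ C)
    (hπ₂ : IsPartialConjBy Γ G b π₂ D) (hwC : w ∉ C) (hvD : v ∈ D) (hCD : C ⊆ D) :
    Commute π₁ π₂ := by
  refine GraphProduct.mulAut_commute_iff.2 fun u x => ?_
  by_cases huC : u ∈ C
  · simp only [map_mul, map_inv, hπ₁.1 u huC, hπ₁.2 w hwC, hπ₂.1 u (hCD huC), hπ₂.1 v hvD]
    group
  · by_cases huD : u ∈ D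
    · simp only [map_mul, map_inv, hπ₂.1 u huD, hπ₁.2 u huC, hπ₁.2 w hwC]
    · simp only [hπ₁.2 u huC, hπ₂.2 u huD]

lemma IsPartialConjBy.commute_of_not_hasSIL (hsil : ¬ HasSIL Γ) (hvw : v ≠ w)
    (hadj : ¬ Γ.Adj v w) {D₀ : Set V} (hD₀ : IsCompOf Γ (star Γ w)ᶜ D₀) (hvD₀ : v ∈ D₀)
    (hC : IsCompOf Γ (star Γ v)ᶜ C) (hD : IsCompOf Γ (star Γ w)ᶜ D) (hwC : w ∉ C)
    (hπ₁ : IsPartialConjBy Γ G a π₁ C) (hπ₂ : IsPartialConjBy Γ G b π₂ D) :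
    Commute π₁ π₂ := by
  have hCD₀ : C ⊆ D₀ := hC.subset_of_not_hasSIL hsil hvw hadj hwC hD₀ hvD₀
  by_cases hDD₀ : D = D₀
  · subst hDD₀
    exact hπ₁.commute_of_subset hπ₂ hwC hvD₀ hCD₀
  · have hvD : v ∉ D := fun hvD => hDD₀ (hD.eq_of_mem hD₀ hvD hvD₀)
    have hCD : Disjoint C D := Set.disjoint_left.2 fun x hxC hxD =>
      hDD₀ (hD.eq_of_mem hD₀ hxD (hCD₀ hxC))
    exact hπ₁.commute_of_disjoint hπ₂ hwC hvD hCD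

end PartialConj

theorem partialConj_commute_general {V : Type u} (Γ : SimpleGraph V)
    (hsil : ¬ HasSIL Γ)
    (G : V → Type uG) [∀ v, Group (G v)]
    (gen : ∀ v, G v)
    (v w : V) (hvw : v ≠ w) (hadj : ¬ Γ.Adj v w)
    (C₀ D₀ : Set V)
    (hC₀ : IsCompOf Γ ((star Γ v)ᶜ) C₀) (hwC₀ : w ∈ C₀)
    (hD₀ : IsCompOf Γ ((star Γ w)ᶜ) D₀) (hvD₀ : v ∈ D₀)
    (C D : Set V) (hC : IsCompOf Γ ((star Γ v)ᶜ) C) (hD : IsCompOf Γ ((star Γ w)ᶜ) D)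
    (hne : ¬ (C = C₀ ∧ D = D₀))
    (π₁ π₂ : MulAut (GraphProduct Γ G))
    (hπ₁ : IsPartialConj Γ G gen π₁ v C) (hπ₂ : IsPartialConj Γ G gen π₂ w D) :
    Commute π₁ π₂ := by
  by_cases hwC : w ∈ C
  · have hvD : v ∉ D := fun hvD =>
      hne ⟨hC.eq_of_mem hC₀ hwC hwC₀, hD.eq_of_mem hD₀ hvD hvD₀⟩
    exact (IsPartialConjBy.commute_of_not_hasSIL hsil hvw.symm (fun h => hadj h.symm) hC₀ hwC₀
      hD hC hvD hπ₂ hπ₁).symm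
  · exact IsPartialConjBy.commute_of_not_hasSIL hsil hvw hadj hD₀ hvD₀ hC hD hwC hπ₁ hπ₂

/-- In a finite connected graph with no SIL, the partial conjugations
`π_{v,C}` and `π_{w,D}` commute unless `C = C₀` and `D = D₀`. -/
theorem partialConj_commute {V : Type u} [Finite V] (Γ : SimpleGraph V)
    (hconn : Γ.Connected) (hsil : ¬ HasSIL Γ)
    (G : V → Type uG) [∀ v, Group (G v)] [∀ v, Nontrivial (G v)]
    (gen : ∀ v, G v) (hgen : ∀ v, Subgroup.zpowers (gen v) = ⊤)
    (v w : V) (hvw : v ≠ w) (hadj : ¬ Γ.Adj v w)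
    (C₀ D₀ : Set V)
    (hC₀ : IsCompOf Γ ((star Γ v)ᶜ) C₀) (hwC₀ : w ∈ C₀)
    (hD₀ : IsCompOf Γ ((star Γ w)ᶜ) D₀) (hvD₀ : v ∈ D₀)
    (C D : Set V) (hC : IsCompOf Γ ((star Γ v)ᶜ) C) (hD : IsCompOf Γ ((star Γ w)ᶜ) D)
    (hne : ¬ (C = C₀ ∧ D = D₀))
    (π₁ π₂ : MulAut (GraphProduct Γ G))
    (hπ₁ : IsPartialConj Γ G gen π₁ v C) (hπ₂ : IsPartialConj Γ G gen π₂ w D) :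
    Commute π₁ π₂ :=
  partialConj_commute_general Γ hsil G gen v w hvw hadj C₀ D₀ hC₀ hwC₀ hD₀ hvD₀ C D hC hD hne π₁ π₂
    hπ₁ hπ₂

end ArXiv
end

section
/- Let Γ be a finite simplicial graph with no SIL. Then Γ is either connected or the disjoint union of two complete graphs. Equivalently: (a) if Γ has at least three connected components then Γ has a SIL, and (b) if Γ has exactly two connected components, one of which is not a complete graph, then Γ has a SIL. -/
open Monoid

namespace ArXiv

universe u uG

variable {V : Type u}

variable (Γ : SimpleGraph V) (G : V → Type uG) [∀ v, Group (G v)]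

/-! A SIL is witnessed by two distinct non-adjacent vertices `v, w` together with any vertex `x`
whose connected component contains neither of them: `x` is adjacent to neither `v` nor `w`, so it
survives the removal of `lk(v) ∩ lk(w)`, and its component there stays inside its component in `Γ`.
Three components supply such `v, w, x`; so does a non-complete component next to a second one. -/

lemma exists_three_ne_of_two_lt_natCard {α : Type*} (h : 2 < Nat.card α) :
    ∃ a b c : α, a ≠ b ∧ a ≠ c ∧ b ≠ c := by
  have := Nat.finite_of_card_ne_zero (by omega : Nat.card α ≠ 0)
  have := Fintype.ofFinite α
  exact Fintype.two_lt_card_iff.mp (Nat.card_eq_fintype_card (α := α) ▸ h)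

namespace IsCompOf

variable {Γ : SimpleGraph V}

lemma exists_reachable_of_mem {S : Set V} {x : V} (hx : x ∈ S) :
    ∃ C, IsCompOf Γ S C ∧ ∀ y ∈ C, Γ.Reachable x y :=
  ⟨_, ⟨(Γ.induce S).connectedComponentMk ⟨x, hx⟩, rfl⟩, by
    rintro _ ⟨y, hy, rfl⟩
    exact (SimpleGraph.ConnectedComponent.exact hy).symm.map
      (SimpleGraph.Embedding.induce S).toHom⟩

end IsCompOf

section HasSIL

open SimpleGraph

variable {Γ : SimpleGraph V}

lemma hasSIL_of_not_reachable {v w x : V} (hvw : v ≠ w) (hadj : ¬ Γ.Adj v w)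
    (hxv : ¬ Γ.Reachable x v) (hxw : ¬ Γ.Reachable x w) : HasSIL Γ := by
  have hx : x ∈ (Γ.neighborSet v ∩ Γ.neighborSet w)ᶜ := fun h => hxv h.1.symm.reachable
  obtain ⟨C, hC, hreach⟩ := IsCompOf.exists_reachable_of_mem (Γ := Γ) hx
  exact ⟨v, w, hvw, hadj, C, hC, fun hv => hxv (hreach v hv),
    fun hw => hxw (hreach w hw)⟩

lemma hasSIL_of_three_ne {c₁ c₂ c₃ : Γ.ConnectedComponent} (h₁₂ : c₁ ≠ c₂) (h₁₃ : c₁ ≠ c₃)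
    (h₂₃ : c₂ ≠ c₃) : HasSIL Γ := by
  induction c₁ using ConnectedComponent.ind with | h v =>
  induction c₂ using ConnectedComponent.ind with | h w =>
  induction c₃ using ConnectedComponent.ind with | h x =>
  exact hasSIL_of_not_reachable (x := x) (by rintro rfl; exact h₁₂ rfl)
    (fun h => h₁₂ (ConnectedComponent.sound h.reachable))
    (fun h => h₁₃ (ConnectedComponent.sound h.symm))
    (fun h => h₂₃ (ConnectedComponent.sound h.symm))

lemma hasSIL_of_not_isClique {c d : Γ.ConnectedComponent} (hdc : d ≠ c)
    (hc : ¬ Γ.IsClique c.supp) : HasSIL Γ := by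
  obtain ⟨a, ha, b, hb, hab, hnadj⟩ : ∃ a ∈ c.supp, ∃ b ∈ c.supp, a ≠ b ∧ ¬ Γ.Adj a b := by
    simpa [IsClique, Set.Pairwise] using hc
  induction d using ConnectedComponent.ind with | h x =>
  rw [ConnectedComponent.mem_supp_iff] at ha hb
  exact hasSIL_of_not_reachable hab hnadj
    (fun h => hdc (ha ▸ ConnectedComponent.sound h))
    (fun h => hdc (hb ▸ ConnectedComponent.sound h))

end HasSIL

/-- `Preconnected` rather than `Connected`, so that the empty graph is covered. -/
theorem no_SIL_connected_or_two_complete_general {V : Type u} (Γ : SimpleGraph V) :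
    (¬ HasSIL Γ →
      Γ.Preconnected ∨
        ∃ A : Set V, A.Nonempty ∧ Aᶜ.Nonempty ∧
          (∀ a ∈ A, ∀ b ∈ A, a ≠ b → Γ.Adj a b) ∧
          (∀ a ∈ Aᶜ, ∀ b ∈ Aᶜ, a ≠ b → Γ.Adj a b) ∧
          (∀ a ∈ A, ∀ b ∈ Aᶜ, ¬ Γ.Adj a b)) ∧
    (3 ≤ Nat.card Γ.ConnectedComponent → HasSIL Γ) ∧
    (Nat.card Γ.ConnectedComponent = 2 →
      ∀ c : Γ.ConnectedComponent,
        (¬ ∀ a ∈ c.supp, ∀ b ∈ c.supp, a ≠ b → Γ.Adj a b) → HasSIL Γ) := by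
  refine ⟨fun hΓ => ?_, fun h => ?_, fun h c hc => ?_⟩
  · by_cases hconn : Γ.Preconnected
    · exact .inl hconn
    obtain ⟨u, v, huv⟩ : ∃ u v, ¬ Γ.Reachable u v := by
      simpa [SimpleGraph.Preconnected] using hconn
    set c := Γ.connectedComponentMk u
    set d := Γ.connectedComponentMk v
    have hcd : c ≠ d := fun h => huv (SimpleGraph.ConnectedComponent.exact h)
    have hcover : ∀ e, e = c ∨ e = d := by
      by_contra! ⟨e, hec, hed⟩
      exact hΓ (hasSIL_of_three_ne hcd (Ne.symm hec) (Ne.symm hed))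
    have hclique : ∀ e : Γ.ConnectedComponent, Γ.IsClique e.supp := by
      intro e
      by_contra he
      rcases hcover e with rfl | rfl
      · exact hΓ (hasSIL_of_not_isClique hcd.symm he)
      · exact hΓ (hasSIL_of_not_isClique hcd he)
    have hcompl : c.suppᶜ = d.supp := by
      ext a
      rcases hcover (Γ.connectedComponentMk a) with h | h <;> simp [h, hcd, hcd.symm]
    refine .inr ⟨c.supp, c.nonempty_supp, hcompl ▸ d.nonempty_supp, hclique c,
      hcompl ▸ hclique d, fun a ha b hb hab => hb ?_⟩
    exact (SimpleGraph.ConnectedComponent.connectedComponentMk_eq_of_adj hab).symm.trans ha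
  · obtain ⟨c₁, c₂, c₃, h₁₂, h₁₃, h₂₃⟩ := exists_three_ne_of_two_lt_natCard h
    exact hasSIL_of_three_ne h₁₂ h₁₃ h₂₃
  · obtain ⟨d, hdc, -⟩ := (Nat.card_eq_two_iff' c).mp h
    exact hasSIL_of_not_isClique hdc hc

/-- A finite graph with no SIL is either connected (preconnected, to
allow the empty graph) or the disjoint union of two complete graphs. Equivalently:
(a) a graph with at least three connected components has a SIL, and (b) a graph with
exactly two connected components, one of which is not complete, has a SIL. -/
theorem no_SIL_connected_or_two_complete {V : Type u} [Finite V] (Γ : SimpleGraph V) :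
    (¬ HasSIL Γ →
      Γ.Preconnected ∨
        ∃ A : Set V, A.Nonempty ∧ Aᶜ.Nonempty ∧
          (∀ a ∈ A, ∀ b ∈ A, a ≠ b → Γ.Adj a b) ∧
          (∀ a ∈ Aᶜ, ∀ b ∈ Aᶜ, a ≠ b → Γ.Adj a b) ∧
          (∀ a ∈ A, ∀ b ∈ Aᶜ, ¬ Γ.Adj a b)) ∧
    (3 ≤ Nat.card Γ.ConnectedComponent → HasSIL Γ) ∧
    (Nat.card Γ.ConnectedComponent = 2 →
      ∀ c : Γ.ConnectedComponent,
        (¬ ∀ a ∈ c.supp, ∀ b ∈ c.supp, a ≠ b → Γ.Adj a b) → HasSIL Γ) :=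
  no_SIL_connected_or_two_complete_general Γ

end ArXiv
end
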